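/- arXiv:1504.06219 — 2 statements merged into one kernel-verified Lean document; each statement's English description precedes it below -/
import Mathlib

section
/- Let a>0, b>0, c≥0, g0>0 and let f0, f1 be the MTTP vector fields on ℝ⁴. Then the iterated Lie bracket [f1,[f0,f1]] vanishes identically on ℝ⁴. -/
/-- The drift vector field of the MTTP system on ℝ⁴. -/
noncomputable def mttpF0 (a c g0 : ℝ) : (Fin 4 → ℝ) → (Fin 4 → ℝ) :=
  fun x => ![a * Real.cos (x 2) - c * x 0 * x 1,
             a * Real.sin (x 2) + c * (x 0) ^ 2 - g0,
             x 3 - c * x 0,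
             0]

/-- The control vector field of the MTTP system on ℝ⁴. -/
def mttpF1 (b : ℝ) : (Fin 4 → ℝ) → (Fin 4 → ℝ) :=
  fun _ => ![0, 0, 0, b]

/-- Lie bracket of vector fields on ℝ⁴: [f,g](x) = Dg(x)·f(x) − Df(x)·g(x). -/
noncomputable def lieBracket4 (f g : (Fin 4 → ℝ) → (Fin 4 → ℝ)) :
    (Fin 4 → ℝ) → (Fin 4 → ℝ) :=
  fun x => fderiv ℝ g x (f x) - fderiv ℝ f x (g x)

/-!
Since `f1` is constant, `[f0, f1] = -Df0 · f1 = -b ∂f0/∂x4`, and `f0` depends on `x4` only through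
the affine term `x4` of its third component, so `[f0, f1] = (0, 0, -b, 0)` is again constant.
The bracket of two constant fields vanishes.
-/

theorem fderiv_apply_eq_of_affine_along {E F : Type*} [NormedAddCommGroup E] [NormedSpace ℝ E]
    [NormedAddCommGroup F] [NormedSpace ℝ F] {f : E → F} {x v : E} {w : F}
    (hf : DifferentiableAt ℝ f x) (hline : ∀ t : ℝ, f (x + t • v) = f x + t • w) :
    fderiv ℝ f x v = w := by
  have hpath : HasDerivAt (fun t : ℝ => x + t • v) v 0 := by
    simpa using ((hasDerivAt_id (0 : ℝ)).smul_const v).const_add x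
  have hcomp : HasDerivAt (fun t : ℝ => f (x + t • v)) (fderiv ℝ f x v) 0 := by
    have hf' : HasFDerivAt f (fderiv ℝ f x) (x + (0 : ℝ) • v) := by simpa using hf.hasFDerivAt
    exact hf'.comp_hasDerivAt 0 hpath
  have haffine : HasDerivAt (fun t : ℝ => f (x + t • v)) w 0 := by
    simp only [hline]
    simpa using ((hasDerivAt_id (0 : ℝ)).smul_const w).const_add (f x)
  exact hcomp.unique haffine

theorem lieBracket4_const_right (f : (Fin 4 → ℝ) → (Fin 4 → ℝ)) (v x : Fin 4 → ℝ) :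
    lieBracket4 f (fun _ => v) x = -fderiv ℝ f x v := by
  simp [lieBracket4]

theorem lieBracket4_const_const (u v : Fin 4 → ℝ) :
    lieBracket4 (fun _ => u) (fun _ => v) = 0 := by
  ext x : 1
  simp [lieBracket4_const_right]

theorem differentiable_mttpF0 (a c g0 : ℝ) : Differentiable ℝ (mttpF0 a c g0) := by
  unfold mttpF0
  repeat' apply Differentiable.finCons
  all_goals fun_prop

theorem mttpF0_add_smul (a b c g0 t : ℝ) (x : Fin 4 → ℝ) :
    mttpF0 a c g0 (x + t • ![0, 0, 0, b]) = mttpF0 a c g0 x + t • ![0, 0, b, 0] := by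
  ext i
  fin_cases i <;> simp [mttpF0, add_sub_right_comm]

theorem lieBracket4_mttpF0_mttpF1 (a b c g0 : ℝ) :
    lieBracket4 (mttpF0 a c g0) (mttpF1 b) = fun _ => -![0, 0, b, 0] := by
  ext x : 1
  unfold mttpF1
  rw [lieBracket4_const_right,
    fderiv_apply_eq_of_affine_along (differentiable_mttpF0 a c g0 x) (mttpF0_add_smul a b c g0 · x)]

theorem stmt2_general (a b c g0 : ℝ)
    (x : Fin 4 → ℝ) :
    lieBracket4 (mttpF1 b) (lieBracket4 (mttpF0 a c g0) (mttpF1 b)) x = 0 := by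
  rw [lieBracket4_mttpF0_mttpF1]
  unfold mttpF1
  rw [lieBracket4_const_const, Pi.zero_apply]

theorem stmt2 (a b c g0 : ℝ) (ha : 0 < a) (hb : 0 < b) (hc : 0 ≤ c) (hg0 : 0 < g0)
    (x : Fin 4 → ℝ) :
    lieBracket4 (mttpF1 b) (lieBracket4 (mttpF0 a c g0) (mttpF1 b)) x = 0 :=
  stmt2_general a b c g0 x
end

section
/- Let a>0, b>0, c≥0, g0>0 and let f0, f1 be the MTTP vector fields on ℝ⁴. Then the iterated Lie brackets [f1,[f0,[f0,f1]]], [f0,[f1,[f0,f1]]] and [f1,[f1,[f0,f1]]] all vanish identically on ℝ⁴. -/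
open ContinuousLinearMap in
/-- The Jacobian of `mttpF0` at `x`, as a continuous linear map. -/
noncomputable def mttpL (a c : ℝ) (x : Fin 4 → ℝ) : (Fin 4 → ℝ) →L[ℝ] (Fin 4 → ℝ) :=
  ContinuousLinearMap.pi
    ![(-(a * Real.sin (x 2))) • proj 2 - (c * x 1) • proj 0 - (c * x 0) • proj 1,
      (a * Real.cos (x 2)) • proj 2 + (2 * c * x 0) • proj 0,
      proj 3 - c • proj 0,
      0]

open ContinuousLinearMap in
lemma hasFDerivAt_mttpF0 (a c g0 : ℝ) (x : Fin 4 → ℝ) :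
    HasFDerivAt (mttpF0 a c g0) (mttpL a c x) x := by
  have h0 : HasFDerivAt (fun y : Fin 4 → ℝ => y 0) (proj 0 : (Fin 4 → ℝ) →L[ℝ] ℝ) x :=
    hasFDerivAt_apply 0 x
  have h1 : HasFDerivAt (fun y : Fin 4 → ℝ => y 1) (proj 1 : (Fin 4 → ℝ) →L[ℝ] ℝ) x :=
    hasFDerivAt_apply 1 x
  have h2 : HasFDerivAt (fun y : Fin 4 → ℝ => y 2) (proj 2 : (Fin 4 → ℝ) →L[ℝ] ℝ) x :=
    hasFDerivAt_apply 2 x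
  have h3 : HasFDerivAt (fun y : Fin 4 → ℝ => y 3) (proj 3 : (Fin 4 → ℝ) →L[ℝ] ℝ) x :=
    hasFDerivAt_apply 3 x
  apply hasFDerivAt_pi''
  intro i
  fin_cases i
  · have H := (((Real.hasDerivAt_cos (x 2)).comp_hasFDerivAt x h2).const_mul a).sub
      ((h0.const_mul c).mul h1)
    have H' := H.congr_of_eventuallyEq
      (Filter.EventuallyEq.of_eq (f := fun y : Fin 4 → ℝ =>
        mttpF0 a c g0 y 0) (by funext y; simp [mttpF0]; try ring; try tauto))
    exact H'.congr_fderiv (by ext v; simp [mttpL]; try ring)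
  · have H := ((((Real.hasDerivAt_sin (x 2)).comp_hasFDerivAt x h2).const_mul a).add
      ((h0.mul h0).const_mul c)).sub_const g0
    have H' := H.congr_of_eventuallyEq
      (Filter.EventuallyEq.of_eq (f := fun y : Fin 4 → ℝ =>
        mttpF0 a c g0 y 1) (by funext y; simp [mttpF0]; try ring; try tauto))
    exact H'.congr_fderiv (by ext v; simp [mttpL]; try ring)
  · have H := h3.sub (h0.const_mul c)
    have H' := H.congr_of_eventuallyEq
      (Filter.EventuallyEq.of_eq (f := fun y : Fin 4 → ℝ =>
        mttpF0 a c g0 y 2) (by funext y; simp [mttpF0]; try ring; try tauto))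
    exact H'.congr_fderiv (by ext v; simp [mttpL]; try ring)
  · have H : HasFDerivAt (fun _ : Fin 4 → ℝ => (0:ℝ)) (0 : (Fin 4 → ℝ) →L[ℝ] ℝ) x := hasFDerivAt_const 0 x
    have H' := H.congr_of_eventuallyEq
      (Filter.EventuallyEq.of_eq (f := fun y : Fin 4 → ℝ =>
        mttpF0 a c g0 y 3) (by funext y; simp [mttpF0]))
    exact H'.congr_fderiv (by ext v; simp [mttpL])

lemma fderiv_mttpF0 (a c g0 : ℝ) (x : Fin 4 → ℝ) :
    fderiv ℝ (mttpF0 a c g0) x = mttpL a c x :=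
  (hasFDerivAt_mttpF0 a c g0 x).fderiv

lemma fderiv_mttpF1 (b : ℝ) (x : Fin 4 → ℝ) : fderiv ℝ (mttpF1 b) x = 0 :=
  fderiv_const_apply _

lemma bracket01 (a b c g0 : ℝ) :
    lieBracket4 (mttpF0 a c g0) (mttpF1 b) = fun _ => ![0, 0, -b, 0] := by
  funext x
  have h : lieBracket4 (mttpF0 a c g0) (mttpF1 b) x
      = - (mttpL a c x) (![0,0,0,b]) := by
    simp [lieBracket4, fderiv_mttpF1, fderiv_mttpF0, mttpF1]
  rw [h]
  funext i
  fin_cases i <;> simp [mttpL]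

/-- The `[f0,[f0,f1]]` vector field. -/
noncomputable def mttpK (a b : ℝ) : (Fin 4 → ℝ) → (Fin 4 → ℝ) :=
  fun x => ![-(a * b * Real.sin (x 2)), a * b * Real.cos (x 2), 0, 0]

/-- `[f0,[f0,f1]]`. -/
lemma bracket001 (a b c g0 : ℝ) :
    lieBracket4 (mttpF0 a c g0) (lieBracket4 (mttpF0 a c g0) (mttpF1 b)) = mttpK a b := by
  funext x
  rw [show lieBracket4 (mttpF0 a c g0) (lieBracket4 (mttpF0 a c g0) (mttpF1 b)) x
      = fderiv ℝ (lieBracket4 (mttpF0 a c g0) (mttpF1 b)) x (mttpF0 a c g0 x)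
        - fderiv ℝ (mttpF0 a c g0) x (lieBracket4 (mttpF0 a c g0) (mttpF1 b) x) from rfl]
  rw [bracket01, fderiv_mttpF0]
  rw [fderiv_const_apply]
  funext i
  fin_cases i <;> simp [mttpL, mttpK] <;> ring

open ContinuousLinearMap in
/-- The Jacobian of `mttpK` at `x`. -/
noncomputable def mttpKL (a b : ℝ) (x : Fin 4 → ℝ) : (Fin 4 → ℝ) →L[ℝ] (Fin 4 → ℝ) :=
  ContinuousLinearMap.pi
    ![(-(a * b * Real.cos (x 2))) • proj 2,
      (-(a * b * Real.sin (x 2))) • proj 2,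
      0, 0]

open ContinuousLinearMap in
lemma hasFDerivAt_mttpK (a b : ℝ) (x : Fin 4 → ℝ) :
    HasFDerivAt (mttpK a b) (mttpKL a b x) x := by
  have h2 : HasFDerivAt (fun y : Fin 4 → ℝ => y 2) (proj 2 : (Fin 4 → ℝ) →L[ℝ] ℝ) x :=
    hasFDerivAt_apply 2 x
  apply hasFDerivAt_pi''
  intro i
  fin_cases i
  · have H := (((Real.hasDerivAt_sin (x 2)).comp_hasFDerivAt x h2).const_mul (a*b)).neg
    have H' := H.congr_of_eventuallyEq
      (Filter.EventuallyEq.of_eq (f := fun y : Fin 4 → ℝ =>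
        mttpK a b y 0) (by funext y; simp [mttpK]; try ring; try tauto))
    exact H'.congr_fderiv (by ext v; simp [mttpKL]; try ring)
  · have H := ((Real.hasDerivAt_cos (x 2)).comp_hasFDerivAt x h2).const_mul (a*b)
    have H' := H.congr_of_eventuallyEq
      (Filter.EventuallyEq.of_eq (f := fun y : Fin 4 → ℝ =>
        mttpK a b y 1) (by funext y; simp [mttpK]; try ring; try tauto))
    exact H'.congr_fderiv (by ext v; simp [mttpKL]; try ring)
  · have H : HasFDerivAt (fun _ : Fin 4 → ℝ => (0:ℝ)) (0 : (Fin 4 → ℝ) →L[ℝ] ℝ) x := hasFDerivAt_const 0 x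
    have H' := H.congr_of_eventuallyEq
      (Filter.EventuallyEq.of_eq (f := fun y : Fin 4 → ℝ =>
        mttpK a b y 2) (by funext y; simp [mttpK]))
    exact H'.congr_fderiv (by ext v; simp [mttpKL])
  · have H : HasFDerivAt (fun _ : Fin 4 → ℝ => (0:ℝ)) (0 : (Fin 4 → ℝ) →L[ℝ] ℝ) x := hasFDerivAt_const 0 x
    have H' := H.congr_of_eventuallyEq
      (Filter.EventuallyEq.of_eq (f := fun y : Fin 4 → ℝ =>
        mttpK a b y 3) (by funext y; simp [mttpK]))
    exact H'.congr_fderiv (by ext v; simp [mttpKL])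

/-- `[f1,[f0,f1]] = 0`. -/
lemma bracket101 (a b c g0 : ℝ) :
    lieBracket4 (mttpF1 b) (lieBracket4 (mttpF0 a c g0) (mttpF1 b)) = fun _ => 0 := by
  funext x
  rw [show lieBracket4 (mttpF1 b) (lieBracket4 (mttpF0 a c g0) (mttpF1 b)) x
      = fderiv ℝ (lieBracket4 (mttpF0 a c g0) (mttpF1 b)) x (mttpF1 b x)
        - fderiv ℝ (mttpF1 b) x (lieBracket4 (mttpF0 a c g0) (mttpF1 b) x) from rfl]
  rw [bracket01, fderiv_mttpF1, fderiv_const_apply]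
  simp

theorem stmt4 (a b c g0 : ℝ) (ha : 0 < a) (hb : 0 < b) (hc : 0 ≤ c) (hg0 : 0 < g0)
    (x : Fin 4 → ℝ) :
    lieBracket4 (mttpF1 b)
        (lieBracket4 (mttpF0 a c g0) (lieBracket4 (mttpF0 a c g0) (mttpF1 b))) x = 0 ∧
    lieBracket4 (mttpF0 a c g0)
        (lieBracket4 (mttpF1 b) (lieBracket4 (mttpF0 a c g0) (mttpF1 b))) x = 0 ∧
    lieBracket4 (mttpF1 b)
        (lieBracket4 (mttpF1 b) (lieBracket4 (mttpF0 a c g0) (mttpF1 b))) x = 0 := by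
  refine ⟨?_, ?_, ?_⟩
  · rw [show lieBracket4 (mttpF1 b)
        (lieBracket4 (mttpF0 a c g0) (lieBracket4 (mttpF0 a c g0) (mttpF1 b))) x
      = fderiv ℝ (lieBracket4 (mttpF0 a c g0) (lieBracket4 (mttpF0 a c g0) (mttpF1 b))) x
          (mttpF1 b x)
        - fderiv ℝ (mttpF1 b) x
          (lieBracket4 (mttpF0 a c g0) (lieBracket4 (mttpF0 a c g0) (mttpF1 b)) x) from rfl]
    rw [bracket001, fderiv_mttpF1, (hasFDerivAt_mttpK a b x).fderiv]
    funext i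
    fin_cases i <;> simp [mttpF1, mttpKL]
  · rw [show lieBracket4 (mttpF0 a c g0)
        (lieBracket4 (mttpF1 b) (lieBracket4 (mttpF0 a c g0) (mttpF1 b))) x
      = fderiv ℝ (lieBracket4 (mttpF1 b) (lieBracket4 (mttpF0 a c g0) (mttpF1 b))) x
          (mttpF0 a c g0 x)
        - fderiv ℝ (mttpF0 a c g0) x
          (lieBracket4 (mttpF1 b) (lieBracket4 (mttpF0 a c g0) (mttpF1 b)) x) from rfl]
    rw [bracket101 a b c g0, fderiv_const_apply]
    simp
  · rw [show lieBracket4 (mttpF1 b)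
        (lieBracket4 (mttpF1 b) (lieBracket4 (mttpF0 a c g0) (mttpF1 b))) x
      = fderiv ℝ (lieBracket4 (mttpF1 b) (lieBracket4 (mttpF0 a c g0) (mttpF1 b))) x
          (mttpF1 b x)
        - fderiv ℝ (mttpF1 b) x
          (lieBracket4 (mttpF1 b) (lieBracket4 (mttpF0 a c g0) (mttpF1 b)) x) from rfl]
    rw [bracket101 a b c g0, fderiv_const_apply]
    simp
end
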